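/- arXiv:2107.13857 — 2 statements merged into one kernel-verified Lean document; each statement's English description precedes it below -/
import Mathlib

section
/- Define C_1(κ) := (1/2) sup over τ ∈ [0, Z] of ∫_0^Z κ E_1(κ|s − τ|) ds. Then C_1(κ) < 1 for every κ > 0 and Z > 0. -/
open MeasureTheory Real

/-- The exponential integral `E₁(x) = ∫_1^∞ e^{-x t}/t dt`. -/
noncomputable def E1 (x : ℝ) : ℝ := ∫ t in Set.Ioi (1 : ℝ), Real.exp (-(x * t)) / t

/-- `C₁(κ) = (1/2) sup_{τ ∈ [0,Z]} ∫₀^Z κ E₁(κ|s-τ|) ds`. -/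
noncomputable def C1 (Z κ : ℝ) : ℝ :=
  (1 / 2) * sSup ((fun τ => ∫ s in (0 : ℝ)..Z, κ * E1 (κ * |s - τ|)) '' Set.Icc 0 Z)

/-!
Writing `κ E₁(κ|s - τ|) = ∫₁^∞ κ e^{-κ|s-τ|t} / t dt` and integrating in `s` first gives
`∫₀^Z κ E₁(κ|s - τ|) ds = ∫₁^∞ (2 - e^{-κτt} - e^{-κ(Z-τ)t}) / t² dt`
`≤ 2 ∫₁^∞ (1 - e^{-κZt}) / t² dt` for every `τ ∈ [0, Z]`. As `∫₁^∞ dt / t² = 1` and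
`e^{-κZt} / t²` has positive integral, this uniform bound is strictly less than `2`.
-/

open Set

lemma integral_exp_neg_mul_abs_of_nonneg {c q : ℝ} (hc : c ≠ 0) (hq : 0 ≤ q) :
    ∫ u in (0 : ℝ)..q, exp (-(c * |u|)) = (1 - exp (-(c * q))) / c := by
  rw [intervalIntegral.integral_congr (g := fun u => exp (-c * u)) fun u hu => ?_,
    intervalIntegral.integral_comp_mul_left (fun u => exp u) (neg_ne_zero.2 hc), integral_exp]
  · simp only [mul_zero, exp_zero, smul_eq_mul, neg_mul]
    field_simp
    ring
  · rw [uIcc_of_le hq] at hu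
    simp [abs_of_nonneg hu.1]

lemma integral_exp_neg_mul_abs_sub {c a b τ : ℝ} (hc : c ≠ 0) (ha : a ≤ τ) (hb : τ ≤ b) :
    ∫ s in a..b, exp (-(c * |s - τ|)) =
      (2 - exp (-(c * (τ - a))) - exp (-(c * (b - τ)))) / c := by
  have hint : ∀ x y : ℝ, IntervalIntegrable (fun u => exp (-(c * |u|))) volume x y :=
    fun x y => (by fun_prop : Continuous _).intervalIntegrable x y
  have hleft : ∫ u in (a - τ)..0, exp (-(c * |u|)) = (1 - exp (-(c * (τ - a)))) / c := by
    rw [← neg_sub τ a, ← neg_zero, ← intervalIntegral.integral_comp_neg]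
    simpa only [abs_neg] using integral_exp_neg_mul_abs_of_nonneg hc (sub_nonneg.2 ha)
  rw [intervalIntegral.integral_comp_sub_right (fun u => exp (-(c * |u|))),
    ← intervalIntegral.integral_add_adjacent_intervals (hint _ 0) (hint 0 _), hleft,
    integral_exp_neg_mul_abs_of_nonneg hc (sub_nonneg.2 hb)]
  ring

lemma integrableOn_Ioi_one_div_sq_of_abs_le {h : ℝ → ℝ} {C : ℝ} (hm : Measurable h)
    (hb : ∀ t ∈ Ioi (1 : ℝ), |h t| ≤ C) : IntegrableOn (fun t => h t / t ^ 2) (Ioi 1) := by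
  refine Integrable.mono' ((integrableOn_Ioi_rpow_of_lt (by norm_num : (-2 : ℝ) < -1)
    one_pos).const_mul C) (hm.div (by fun_prop)).aestronglyMeasurable ?_
  filter_upwards [ae_restrict_mem measurableSet_Ioi] with t ht
  have ht0 : 0 < t := one_pos.trans ht
  rw [norm_div, norm_eq_abs, norm_pow, norm_of_nonneg ht0.le, rpow_neg ht0.le, ← div_eq_mul_inv]
  exact_mod_cast div_le_div_of_nonneg_right (hb t ht) (by positivity)

lemma integral_Ioi_one_one_div_sq : ∫ t in Ioi (1 : ℝ), 1 / t ^ 2 = 1 := by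
  rw [setIntegral_congr_fun measurableSet_Ioi (g := fun t => t ^ (-2 : ℝ)) fun t ht => ?_,
    integral_Ioi_rpow_of_lt (by norm_num) one_pos]
  · norm_num
  · show 1 / t ^ 2 = t ^ (-2 : ℝ)
    rw [rpow_neg (one_pos.trans ht).le, one_div]
    norm_cast

lemma integral_Ioi_one_one_sub_exp_div_sq_lt_one {L : ℝ} (hL : 0 ≤ L) :
    ∫ t in Ioi (1 : ℝ), (1 - exp (-(L * t))) / t ^ 2 < 1 := by
  have hexp_le : ∀ t ∈ Ioi (1 : ℝ), |exp (-(L * t))| ≤ 1 := fun t ht => by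
    rw [abs_of_pos (exp_pos _), exp_le_one_iff, neg_nonpos]
    exact mul_nonneg hL (one_pos.trans ht).le
  have hint_exp := integrableOn_Ioi_one_div_sq_of_abs_le (by fun_prop) hexp_le
  have hpos : 0 < ∫ t in Ioi (1 : ℝ), exp (-(L * t)) / t ^ 2 := by
    rw [setIntegral_pos_iff_support_of_nonneg_ae
      (ae_of_all _ fun t => by positivity) hint_exp]
    have : Function.support (fun t => exp (-(L * t)) / t ^ 2) ∩ Ioi 1 = Ioi 1 :=
      inter_eq_right.2 fun t ht => (div_pos (exp_pos _) (pow_pos (one_pos.trans ht) 2)).ne'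
    rw [this, Real.volume_Ioi]
    exact ENNReal.zero_lt_top
  have hint_one := integrableOn_Ioi_one_div_sq_of_abs_le (h := fun _ => 1) measurable_const
    fun _ _ => (abs_one).le
  simp_rw [sub_div]
  rw [integral_sub hint_one hint_exp, integral_Ioi_one_one_div_sq]
  linarith

lemma integrableOn_Ioi_one_two_sub_exp_sub_exp_div_sq {κ x y : ℝ} (hκ : 0 ≤ κ) (hx : 0 ≤ x)
    (hy : 0 ≤ y) :
    IntegrableOn (fun t => (2 - exp (-(κ * t * x)) - exp (-(κ * t * y))) / t ^ 2) (Ioi 1) := by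
  refine integrableOn_Ioi_one_div_sq_of_abs_le (C := 2) (by fun_prop) fun t ht => ?_
  have hexp_le : ∀ z, 0 ≤ z → exp (-(κ * t * z)) ≤ 1 := fun z hz =>
    exp_le_one_iff.2 (neg_nonpos.2 (mul_nonneg (mul_nonneg hκ (one_pos.trans ht).le) hz))
  rw [abs_le]
  constructor <;>
    linarith [hexp_le x hx, hexp_le y hy, exp_pos (-(κ * t * x)), exp_pos (-(κ * t * y))]

lemma integral_mul_E1_mul_abs_sub {κ a b τ : ℝ} (hκ : 0 < κ) (ha : a ≤ τ) (hb : τ ≤ b) :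
    ∫ s in a..b, κ * E1 (κ * |s - τ|) =
      ∫ t in Ioi 1, (2 - exp (-(κ * t * (τ - a))) - exp (-(κ * t * (b - τ)))) / t ^ 2 := by
  set F : ℝ → ℝ → ℝ := fun s t => κ * (exp (-(κ * |s - τ| * t)) / t)
  set g : ℝ → ℝ :=
    fun t => (2 - exp (-(κ * t * (τ - a))) - exp (-(κ * t * (b - τ)))) / t ^ 2
  have hF_nonneg : ∀ s, ∀ t ∈ Ioi (1 : ℝ), 0 ≤ F s t := fun s t ht =>
    mul_nonneg hκ.le (div_nonneg (exp_pos _).le (one_pos.trans ht).le)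
  have hF_section : ∀ t ∈ Ioi (1 : ℝ), ∫ s in Ioc a b, F s t = g t := fun t ht => by
    have ht0 : 0 < t := one_pos.trans ht
    simp_rw [F, show ∀ s, κ * |s - τ| * t = κ * t * |s - τ| from fun s => by ring]
    rw [integral_const_mul, integral_div, ← intervalIntegral.integral_of_le (ha.trans hb),
      integral_exp_neg_mul_abs_sub (mul_pos hκ ht0).ne' ha hb]
    simp only [g]
    field_simp
  have hg_int : IntegrableOn g (Ioi 1) :=
    integrableOn_Ioi_one_two_sub_exp_sub_exp_div_sq hκ.le (sub_nonneg.2 ha) (sub_nonneg.2 hb)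
  have hF_int : Integrable (Function.uncurry F)
      ((volume.restrict (Ioc a b)).prod (volume.restrict (Ioi 1))) := by
    rw [integrable_prod_iff' (by fun_prop)]
    refine ⟨ae_of_all _ fun t => (by fun_prop : Continuous fun s => F s t).integrableOn_Ioc, ?_⟩
    refine hg_int.congr_fun (fun t ht => ?_) measurableSet_Ioi
    rw [← hF_section t ht]
    exact setIntegral_congr_fun measurableSet_Ioc fun s _ =>
      (norm_of_nonneg (hF_nonneg s t ht)).symm
  calc ∫ s in a..b, κ * E1 (κ * |s - τ|)
      = ∫ s in Ioc a b, ∫ t in Ioi 1, F s t := by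
        simp_rw [intervalIntegral.integral_of_le (ha.trans hb), E1, F, integral_const_mul]
    _ = ∫ t in Ioi 1, ∫ s in Ioc a b, F s t := integral_integral_swap hF_int
    _ = ∫ t in Ioi 1, g t := setIntegral_congr_fun measurableSet_Ioi hF_section

lemma integral_mul_E1_mul_abs_sub_le {κ a b τ : ℝ} (hκ : 0 < κ) (ha : a ≤ τ) (hb : τ ≤ b) :
    ∫ s in a..b, κ * E1 (κ * |s - τ|) ≤
      2 * ∫ t in Ioi 1, (1 - exp (-(κ * (b - a) * t))) / t ^ 2 := by
  rw [integral_mul_E1_mul_abs_sub hκ ha hb, ← integral_const_mul]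
  refine setIntegral_mono_on ?_ ?_ measurableSet_Ioi fun t ht => ?_
  · exact integrableOn_Ioi_one_two_sub_exp_sub_exp_div_sq hκ.le (sub_nonneg.2 ha)
      (sub_nonneg.2 hb)
  · refine (integrableOn_Ioi_one_div_sq_of_abs_le (C := 1) (by fun_prop) fun t ht => ?_).const_mul 2
    have : exp (-(κ * (b - a) * t)) ≤ 1 := exp_le_one_iff.2 (neg_nonpos.2
      (mul_nonneg (mul_nonneg hκ.le (by linarith)) (one_pos.trans ht).le))
    rw [abs_le]
    constructor <;> linarith [exp_pos (-(κ * (b - a) * t))]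
  · have hκt : 0 ≤ κ * t := (mul_pos hκ (one_pos.trans ht)).le
    have h1 : exp (-(κ * (b - a) * t)) ≤ exp (-(κ * t * (τ - a))) :=
      exp_le_exp.2 (by nlinarith)
    have h2 : exp (-(κ * (b - a) * t)) ≤ exp (-(κ * t * (b - τ))) :=
      exp_le_exp.2 (by nlinarith)
    rw [mul_div_assoc']
    exact div_le_div_of_nonneg_right (by linarith) (sq_nonneg t)

theorem C1_lt_one (Z κ : ℝ) (hZ : 0 < Z) (hκ : 0 < κ) : C1 Z κ < 1 := by
  have hbound : ∀ x ∈ (fun τ => ∫ s in (0 : ℝ)..Z, κ * E1 (κ * |s - τ|)) '' Icc 0 Z,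
      x ≤ 2 * ∫ t in Ioi 1, (1 - exp (-(κ * Z * t))) / t ^ 2 := by
    rintro _ ⟨τ, hτ, rfl⟩
    simpa only [sub_zero] using integral_mul_E1_mul_abs_sub_le hκ hτ.1 hτ.2
  have hsup := csSup_le ((nonempty_Icc.2 hZ.le).image _) hbound
  have hlt := integral_Ioi_one_one_sub_exp_div_sq_lt_one (mul_pos hκ hZ).le
  rw [C1]
  linarith
end

section
/- Let J(μ) := (1/2)∫_{−1}^1 I(μ') dμ' for an integrable function I on (−1,1), and let s_+(z) = 1 if z ≥ 0, else 0. Then for any integrable I, I' on (−1,1): ∫_{−1}^1 (J − J')·s_+(I(μ) − I'(μ)) dμ ≤ ∫_{−1}^1 (I − I')_+(μ') dμ', where J, J' are the respective averages and z_+ = max(z, 0). Consequently, ∫_{−1}^1 [(I − I') − (J − J')]·s_+(I − I') dμ ≥ 0. -/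
open MeasureTheory

/-- `s₊(z) = 1` if `z ≥ 0`, else `0`. -/
noncomputable def splus (z : ℝ) : ℝ := if 0 ≤ z then 1 else 0

lemma splus_measurable : Measurable splus := by
  unfold splus
  exact Measurable.ite measurableSet_Ici measurable_const measurable_const

lemma splus_nonneg (z : ℝ) : 0 ≤ splus z := by
  unfold splus; split <;> norm_num

lemma splus_le_one (z : ℝ) : splus z ≤ 1 := by
  unfold splus; split <;> norm_num

lemma mul_splus (z : ℝ) : z * splus z = max z 0 := by
  unfold splus
  rcases le_or_gt 0 z with h | h
  · simp [h, max_eq_left h]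
  · simp [not_le.mpr h, max_eq_right h.le]

theorem accretivity_scattering_estimate (I I' : ℝ → ℝ)
    (hI : IntegrableOn I (Set.Ioo (-1 : ℝ) 1)) (hI' : IntegrableOn I' (Set.Ioo (-1 : ℝ) 1))
    (J J' : ℝ) (hJ : J = (1 / 2) * ∫ μ' in (-1 : ℝ)..1, I μ')
    (hJ' : J' = (1 / 2) * ∫ μ' in (-1 : ℝ)..1, I' μ') :
    (∫ μ in (-1 : ℝ)..1, (J - J') * splus (I μ - I' μ))
      ≤ (∫ μ' in (-1 : ℝ)..1, max (I μ' - I' μ') 0) ∧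
    0 ≤ ∫ μ in (-1 : ℝ)..1, ((I μ - I' μ) - (J - J')) * splus (I μ - I' μ) := by
  set f : ℝ → ℝ := fun μ => I μ - I' μ with hfdef
  have hIc : IntegrableOn I (Set.Ioc (-1 : ℝ) 1) :=
    (integrableOn_Ioc_iff_integrableOn_Ioo).mpr hI
  have hI'c : IntegrableOn I' (Set.Ioc (-1 : ℝ) 1) :=
    (integrableOn_Ioc_iff_integrableOn_Ioo).mpr hI'
  have hfIoc : IntegrableOn f (Set.Ioc (-1 : ℝ) 1) := hIc.sub hI'c
  have hle : (-1 : ℝ) ≤ 1 := by norm_num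
  have hf : IntervalIntegrable f volume (-1) 1 :=
    (intervalIntegrable_iff_integrableOn_Ioc_of_le hle).mpr hfIoc
  -- integrability of splus ∘ f
  have hgmeas : AEStronglyMeasurable (fun μ => splus (f μ))
      (volume.restrict (Set.Ioc (-1 : ℝ) 1)) :=
    (splus_measurable.comp_aemeasurable hfIoc.aemeasurable).aestronglyMeasurable
  have hgIoc : IntegrableOn (fun μ => splus (f μ)) (Set.Ioc (-1 : ℝ) 1) := by
    refine ⟨hgmeas, ?_⟩
    apply HasFiniteIntegral.of_bounded (C := 1)
    filter_upwards with μ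
    rw [Real.norm_eq_abs, abs_of_nonneg (splus_nonneg _)]
    exact splus_le_one _
  have hg : IntervalIntegrable (fun μ => splus (f μ)) volume (-1) 1 :=
    (intervalIntegrable_iff_integrableOn_Ioc_of_le hle).mpr hgIoc
  have hmax : IntervalIntegrable (fun μ => max (f μ) 0) volume (-1) 1 :=
    (intervalIntegrable_iff_integrableOn_Ioc_of_le hle).mpr hfIoc.pos_part
  set A : ℝ := ∫ μ in (-1 : ℝ)..1, splus (f μ) with hA
  set B : ℝ := ∫ μ in (-1 : ℝ)..1, max (f μ) 0 with hB
  have hA0 : 0 ≤ A :=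
    intervalIntegral.integral_nonneg hle (fun μ _ => splus_nonneg _)
  have hA2 : A ≤ 2 := by
    have := intervalIntegral.integral_mono_on hle hg
      (intervalIntegrable_const (c := (1:ℝ))) (fun μ _ => splus_le_one _)
    have h2 : (∫ _ in (-1 : ℝ)..1, (1:ℝ)) = 2 := by simp; norm_num
    rw [hA]; linarith
  have hB0 : 0 ≤ B :=
    intervalIntegral.integral_nonneg hle (fun μ _ => le_max_right _ _)
  have hD : J - J' = (1/2) * ∫ μ in (-1 : ℝ)..1, f μ := by
    rw [hJ, hJ', hfdef]
    rw [intervalIntegral.integral_sub ((intervalIntegrable_iff_integrableOn_Ioc_of_le hle).mpr hIc)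
      ((intervalIntegrable_iff_integrableOn_Ioc_of_le hle).mpr hI'c)]
    ring
  have h2D : 2 * (J - J') ≤ B := by
    have hmono : (∫ μ in (-1 : ℝ)..1, f μ) ≤ B :=
      intervalIntegral.integral_mono_on hle hf hmax (fun μ _ => le_max_left _ _)
    rw [hD]; linarith
  have hkey : (J - J') * A ≤ B := by
    rcases le_or_gt 0 (J - J') with h | h
    · calc (J - J') * A ≤ (J - J') * 2 := by nlinarith
        _ ≤ B := by linarith
    · nlinarith
  have hint1 : (∫ μ in (-1 : ℝ)..1, (J - J') * splus (f μ)) = (J - J') * A := by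
    rw [hA, intervalIntegral.integral_const_mul]
  have hfg : ∀ μ, f μ * splus (f μ) = max (f μ) 0 := fun μ => mul_splus _
  constructor
  · calc (∫ μ in (-1 : ℝ)..1, (J - J') * splus (I μ - I' μ)) = (J - J') * A := hint1
      _ ≤ B := hkey
  · have : (∫ μ in (-1 : ℝ)..1, ((f μ) - (J - J')) * splus (f μ)) = B - (J - J') * A := by
      have heq : ∀ μ, ((f μ) - (J - J')) * splus (f μ)
          = max (f μ) 0 - (J - J') * splus (f μ) := by
        intro μ; rw [← hfg μ]; ring
      rw [intervalIntegral.integral_congr (fun μ _ => heq μ),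
        intervalIntegral.integral_sub hmax ((hg.const_mul (J - J'))), hint1]
    rw [show (fun μ => ((I μ - I' μ) - (J - J')) * splus (I μ - I' μ))
        = (fun μ => ((f μ) - (J - J')) * splus (f μ)) from rfl] at *
    linarith [this ▸ sub_nonneg.mpr hkey]
end
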